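/- arXiv:2301.12482 — 8 statements merged into one kernel-verified Lean document; each statement's English description precedes it below -/
import Mathlib

section
/- Let R_A be a transitive relation on a set A, R_B a transitive relation on a set B, with C = A ∩ B, and suppose R_A and R_B agree on C (i.e., for c, c' ∈ C, c R_A c' iff c R_B c'). Define R on A ∪ B by: d R e iff (d, e ∈ A and d R_A e) or (d, e ∈ B and d R_B e) or (d ∈ A, e ∈ B and ∃c ∈ C, d R_A c and c R_B e) or (d ∈ B, e ∈ A and ∃c ∈ C, d R_B c and c R_A e). Then R is transitive. -/
/-- The amalgam of two relations `rA` on `A` and `rB` on `B` over `C = A ∩ B`. -/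
def amalg {U : Type*} (A B : Set U) (rA rB : U → U → Prop) (d e : U) : Prop :=
  (d ∈ A ∧ e ∈ A ∧ rA d e) ∨ (d ∈ B ∧ e ∈ B ∧ rB d e) ∨
  (d ∈ A ∧ e ∈ B ∧ ∃ c ∈ A ∩ B, rA d c ∧ rB c e) ∨
  (d ∈ B ∧ e ∈ A ∧ ∃ c ∈ A ∩ B, rB d c ∧ rA c e)

theorem amalg_transitive {U : Type*} (A B : Set U) (rA rB : U → U → Prop)
    (hTA : ∀ x ∈ A, ∀ y ∈ A, ∀ z ∈ A, rA x y → rA y z → rA x z)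
    (hTB : ∀ x ∈ B, ∀ y ∈ B, ∀ z ∈ B, rB x y → rB y z → rB x z)
    (hAgree : ∀ c ∈ A ∩ B, ∀ c' ∈ A ∩ B, (rA c c' ↔ rB c c')) :
    ∀ x y z, amalg A B rA rB x y → amalg A B rA rB y z → amalg A B rA rB x z := by
  intro x y z hxy hyz
  unfold amalg at *
  rcases hxy with ⟨xA, yA, h1⟩ | ⟨xB, yB, h1⟩ | ⟨xA, yB, c, hc, h1, h2⟩ |
    ⟨xB, yA, c, hc, h1, h2⟩
  · rcases hyz with ⟨yA', zA, g1⟩ | ⟨yB, zB, g1⟩ | ⟨yA', zB, c', hc', g1, g2⟩ |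
      ⟨yB, zA, c', hc', g1, g2⟩
    · exact Or.inl ⟨xA, zA, hTA x xA y yA z zA h1 g1⟩
    · exact Or.inr (Or.inr (Or.inl ⟨xA, zB, y, ⟨yA, yB⟩, h1, g1⟩))
    · exact Or.inr (Or.inr (Or.inl ⟨xA, zB, c', hc',
        hTA x xA y yA c' hc'.1 h1 g1, g2⟩))
    · -- x R_A y, y ∈ B, y R_B c', c' R_A z
      have g1' : rA y c' := (hAgree y ⟨yA, yB⟩ c' hc').mpr g1
      exact Or.inl ⟨xA, zA, hTA x xA c' hc'.1 z zA
        (hTA x xA y yA c' hc'.1 h1 g1') g2⟩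
  · rcases hyz with ⟨yA, zA, g1⟩ | ⟨yB', zB, g1⟩ | ⟨yA, zB, c', hc', g1, g2⟩ |
      ⟨yB', zA, c', hc', g1, g2⟩
    · exact Or.inr (Or.inr (Or.inr ⟨xB, zA, y, ⟨yA, yB⟩, h1, g1⟩))
    · exact Or.inr (Or.inl ⟨xB, zB, hTB x xB y yB z zB h1 g1⟩)
    · -- x R_B y, y ∈ A, y R_A c', c' R_B z
      have g1' : rB y c' := (hAgree y ⟨yA, yB⟩ c' hc').mp g1
      exact Or.inr (Or.inl ⟨xB, zB, hTB x xB c' hc'.2 z zB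
        (hTB x xB y yB c' hc'.2 h1 g1') g2⟩)
    · exact Or.inr (Or.inr (Or.inr ⟨xB, zA, c', hc',
        hTB x xB y yB c' hc'.2 h1 g1, g2⟩))
  · -- x R_A c, c R_B y
    rcases hyz with ⟨yA, zA, g1⟩ | ⟨yB', zB, g1⟩ | ⟨yA, zB, c', hc', g1, g2⟩ |
      ⟨yB', zA, c', hc', g1, g2⟩
    · -- y ∈ A ∩ B, transfer c R_B y to c R_A y
      have h2' : rA c y := (hAgree c hc y ⟨yA, yB⟩).mpr h2
      exact Or.inl ⟨xA, zA, hTA x xA y yA z zA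
        (hTA x xA c hc.1 y yA h1 h2') g1⟩
    · exact Or.inr (Or.inr (Or.inl ⟨xA, zB, c, hc, h1,
        hTB c hc.2 y yB z zB h2 g1⟩))
    · -- y ∈ A ∩ B, y R_A c', c' R_B z
      have h2' : rA c y := (hAgree c hc y ⟨yA, yB⟩).mpr h2
      exact Or.inr (Or.inr (Or.inl ⟨xA, zB, c', hc',
        hTA x xA y yA c' hc'.1 (hTA x xA c hc.1 y yA h1 h2') g1, g2⟩))
    · -- c R_B y, y R_B c', so c R_B c', transfer to rA
      have hcc' : rB c c' := hTB c hc.2 y yB c' hc'.2 h2 g1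
      have hcc'A : rA c c' := (hAgree c hc c' hc').mpr hcc'
      exact Or.inl ⟨xA, zA, hTA x xA c' hc'.1 z zA
        (hTA x xA c hc.1 c' hc'.1 h1 hcc'A) g2⟩
  · -- x R_B c, c R_A y
    rcases hyz with ⟨yA', zA, g1⟩ | ⟨yB, zB, g1⟩ | ⟨yA', zB, c', hc', g1, g2⟩ |
      ⟨yB, zA, c', hc', g1, g2⟩
    · exact Or.inr (Or.inr (Or.inr ⟨xB, zA, c, hc, h1,
        hTA c hc.1 y yA z zA h2 g1⟩))
    · have h2' : rB c y := (hAgree c hc y ⟨yA, yB⟩).mp h2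
      exact Or.inr (Or.inl ⟨xB, zB, hTB x xB y yB z zB
        (hTB x xB c hc.2 y yB h1 h2') g1⟩)
    · -- c R_A y, y R_A c', so c R_A c', transfer to rB
      have hcc' : rA c c' := hTA c hc.1 y yA c' hc'.1 h2 g1
      have hcc'B : rB c c' := (hAgree c hc c' hc').mp hcc'
      exact Or.inr (Or.inl ⟨xB, zB, hTB x xB c' hc'.2 z zB
        (hTB x xB c hc.2 c' hc'.2 h1 hcc'B) g2⟩)
    · have h2' : rB c y := (hAgree c hc y ⟨yA, yB⟩).mp h2
      exact Or.inr (Or.inr (Or.inr ⟨xB, zA, c', hc',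
        hTB x xB y yB c' hc'.2 (hTB x xB c hc.2 y yB h1 h2') g1, g2⟩))
end

section
/- With the setup of the amalgamation construction for transitive relations (R on A ∪ B defined as the union of R_A, R_B, R_A ∘ R_B through C, and R_B ∘ R_A through C, where R_A, R_B are transitive and agree on C = A ∩ B), the restriction of R to A equals R_A; that is, for all d, e ∈ A, d R e iff d R_A e. -/
theorem amalg_restrict_left {U : Type*} (A B : Set U) (rA rB : U → U → Prop)
    (hTA : ∀ x ∈ A, ∀ y ∈ A, ∀ z ∈ A, rA x y → rA y z → rA x z)
    (hTB : ∀ x ∈ B, ∀ y ∈ B, ∀ z ∈ B, rB x y → rB y z → rB x z)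
    (hAgree : ∀ c ∈ A ∩ B, ∀ c' ∈ A ∩ B, (rA c c' ↔ rB c c')) :
    ∀ d ∈ A, ∀ e ∈ A, (amalg A B rA rB d e ↔ rA d e) := by
  intro d hd e he
  constructor
  · rintro (⟨_, _, h⟩ | ⟨hdB, heB, h⟩ | ⟨_, heB, c, hc, hdc, hce⟩ | ⟨hdB, _, c, hc, hdc, hce⟩)
    · exact h
    · exact (hAgree d ⟨hd, hdB⟩ e ⟨he, heB⟩).mpr h
    · exact hTA d hd c hc.1 e he hdc ((hAgree c hc e ⟨he, heB⟩).mpr hce)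
    · exact hTA d hd c hc.1 e he ((hAgree d ⟨hd, hdB⟩ c hc).mpr hdc) hce
  · intro h
    exact Or.inl ⟨hd, he, h⟩
end

section
/- With the amalgamation construction for transitive relations (R defined on A ∪ B as above, R_A and R_B transitive and agreeing on C = A ∩ B), if R_A and R_B are both antisymmetric, then R is antisymmetric. -/
lemma amalg_swap {U : Type*} (A B : Set U) (rA rB : U → U → Prop) (d e : U)
    (h : amalg A B rA rB d e) : amalg B A rB rA d e := by
  rcases h with ⟨h1, h2, h3⟩ | ⟨h1, h2, h3⟩ | ⟨h1, h2, c, hc, h3, h4⟩ | ⟨h1, h2, c, hc, h3, h4⟩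
  · exact Or.inr (Or.inl ⟨h1, h2, h3⟩)
  · exact Or.inl ⟨h1, h2, h3⟩
  · exact Or.inr (Or.inr (Or.inr ⟨h1, h2, c, ⟨hc.2, hc.1⟩, h3, h4⟩))
  · exact Or.inr (Or.inr (Or.inl ⟨h1, h2, c, ⟨hc.2, hc.1⟩, h3, h4⟩))

lemma amalg_mem {U : Type*} (A B : Set U) (rA rB : U → U → Prop) (d e : U)
    (h : amalg A B rA rB d e) : (d ∈ A ∨ d ∈ B) ∧ (e ∈ A ∨ e ∈ B) := by
  unfold amalg at h; tauto

/-- If both points are in `A`, the amalgam reduces to `rA`. -/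
lemma amalg_toA {U : Type*} (A B : Set U) (rA rB : U → U → Prop)
    (hTA : ∀ x ∈ A, ∀ y ∈ A, ∀ z ∈ A, rA x y → rA y z → rA x z)
    (hAgree : ∀ c ∈ A ∩ B, ∀ c' ∈ A ∩ B, (rA c c' ↔ rB c c'))
    (x y : U) (hxA : x ∈ A) (hyA : y ∈ A) (h : amalg A B rA rB x y) : rA x y := by
  rcases h with ⟨_, _, h⟩ | ⟨hxB, hyB, h⟩ | ⟨_, hyB, c, hc, h1, h2⟩ |
    ⟨hxB, _, c, hc, h1, h2⟩
  · exact h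
  · exact (hAgree x ⟨hxA, hxB⟩ y ⟨hyA, hyB⟩).mpr h
  · exact hTA x hxA c hc.1 y hyA h1 ((hAgree c hc y ⟨hyA, hyB⟩).mpr h2)
  · exact hTA x hxA c hc.1 y hyA ((hAgree x ⟨hxA, hxB⟩ c hc).mpr h1) h2

/-- The key mixed case: `x ∈ A \ B`, `y ∈ B \ A` leads to a contradiction. -/
lemma amalg_mixed {U : Type*} (A B : Set U) (rA rB : U → U → Prop)
    (hTA : ∀ x ∈ A, ∀ y ∈ A, ∀ z ∈ A, rA x y → rA y z → rA x z)
    (hTB : ∀ x ∈ B, ∀ y ∈ B, ∀ z ∈ B, rB x y → rB y z → rB x z)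
    (hAgree : ∀ c ∈ A ∩ B, ∀ c' ∈ A ∩ B, (rA c c' ↔ rB c c'))
    (hASA : ∀ x ∈ A, ∀ y ∈ A, rA x y → rA y x → x = y)
    (x y : U) (hxA : x ∈ A) (hxB : x ∉ B) (hyB : y ∈ B) (hyA : y ∉ A)
    (hxy : amalg A B rA rB x y) (hyx : amalg A B rA rB y x) : x = y := by
  exfalso
  rcases hxy with ⟨_, hyA', _⟩ | ⟨hxB', _, _⟩ | ⟨_, _, c, hc, h1, h2⟩ | ⟨hxB', _, _⟩
  · exact hyA hyA'
  · exact hxB hxB'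
  · rcases hyx with ⟨hyA', _, _⟩ | ⟨_, hxB', _⟩ | ⟨hyA', _, _⟩ |
      ⟨_, _, c', hc', h1', h2'⟩
    · exact hyA hyA'
    · exact hxB hxB'
    · exact hyA hyA'
    · -- rA x c, rB c y, rB y c', rA c' x
      have hcc' : rB c c' := hTB c hc.2 y hyB c' hc'.2 h2 h1'
      have hxc' : rA x c' := hTA x hxA c hc.1 c' hc'.1 h1 ((hAgree c hc c' hc').mpr hcc')
      have hx : x = c' := hASA x hxA c' hc'.1 hxc' h2'
      exact hxB (hx ▸ hc'.2)
  · exact hxB hxB'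

theorem amalg_antisymm {U : Type*} (A B : Set U) (rA rB : U → U → Prop)
    (hTA : ∀ x ∈ A, ∀ y ∈ A, ∀ z ∈ A, rA x y → rA y z → rA x z)
    (hTB : ∀ x ∈ B, ∀ y ∈ B, ∀ z ∈ B, rB x y → rB y z → rB x z)
    (hAgree : ∀ c ∈ A ∩ B, ∀ c' ∈ A ∩ B, (rA c c' ↔ rB c c'))
    (hASA : ∀ x ∈ A, ∀ y ∈ A, rA x y → rA y x → x = y)
    (hASB : ∀ x ∈ B, ∀ y ∈ B, rB x y → rB y x → x = y) :
    ∀ x y, amalg A B rA rB x y → amalg A B rA rB y x → x = y := by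
  have hAgree' : ∀ c ∈ B ∩ A, ∀ c' ∈ B ∩ A, (rB c c' ↔ rA c c') := by
    intro c hc c' hc'
    exact (hAgree c ⟨hc.2, hc.1⟩ c' ⟨hc'.2, hc'.1⟩).symm
  intro x y hxy hyx
  by_cases hxA : x ∈ A <;> by_cases hyA : y ∈ A <;>
    by_cases hxB : x ∈ B <;> by_cases hyB : y ∈ B
  all_goals try exact hASA x hxA y hyA (amalg_toA A B rA rB hTA hAgree x y hxA hyA hxy) (amalg_toA A B rA rB hTA hAgree y x hyA hxA hyx)
  all_goals try exact hASB x hxB y hyB (amalg_toA B A rB rA hTB hAgree' x y hxB hyB (amalg_swap A B rA rB x y hxy)) (amalg_toA B A rB rA hTB hAgree' y x hyB hxB (amalg_swap A B rA rB y x hyx))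
  all_goals try exact amalg_mixed A B rA rB hTA hTB hAgree hASA x y hxA hxB hyB hyA hxy hyx
  all_goals try exact amalg_mixed B A rB rA hTB hTA hAgree' hASB x y hxB hxA hyA hyB (amalg_swap A B rA rB x y hxy) (amalg_swap A B rA rB y x hyx)
  all_goals
    have h1 := amalg_mem A B rA rB x y hxy
    tauto
end

section
/- With the amalgamation construction for transitive relations (R on A ∪ B defined as above from transitive R_A, R_B agreeing on C = A ∩ B), R is the smallest transitive relation on A ∪ B containing both R_A and R_B. -/
theorem amalg_smallest_transitive {U : Type*} (A B : Set U) (rA rB : U → U → Prop)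
    (hTA : ∀ x ∈ A, ∀ y ∈ A, ∀ z ∈ A, rA x y → rA y z → rA x z)
    (hTB : ∀ x ∈ B, ∀ y ∈ B, ∀ z ∈ B, rB x y → rB y z → rB x z)
    (hAgree : ∀ c ∈ A ∩ B, ∀ c' ∈ A ∩ B, (rA c c' ↔ rB c c')) :
    (∀ x y z, amalg A B rA rB x y → amalg A B rA rB y z → amalg A B rA rB x z) ∧
    (∀ d ∈ A, ∀ e ∈ A, rA d e → amalg A B rA rB d e) ∧
    (∀ d ∈ B, ∀ e ∈ B, rB d e → amalg A B rA rB d e) ∧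
    (∀ T : U → U → Prop, (∀ x y z, T x y → T y z → T x z) →
      (∀ d ∈ A, ∀ e ∈ A, rA d e → T d e) →
      (∀ d ∈ B, ∀ e ∈ B, rB d e → T d e) →
      ∀ x y, amalg A B rA rB x y → T x y) := by
  refine ⟨?_, ?_, ?_, ?_⟩
  · intro x y z hxy hyz
    rcases hxy with ⟨hxA, hyA, r1⟩ | ⟨hxB, hyB, r1⟩ |
        ⟨hxA, hyB, c1, ⟨hc1A, hc1B⟩, r1, r1'⟩ | ⟨hxB, hyA, c1, ⟨hc1A, hc1B⟩, r1, r1'⟩ <;>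
      rcases hyz with ⟨hyA', hzA, r2⟩ | ⟨hyB', hzB, r2⟩ |
        ⟨hyA', hzB, c2, ⟨hc2A, hc2B⟩, r2, r2'⟩ | ⟨hyB', hzA, c2, ⟨hc2A, hc2B⟩, r2, r2'⟩
    -- AA, AA
    · exact Or.inl ⟨hxA, hzA, hTA x hxA y hyA z hzA r1 r2⟩
    -- AA, BB
    · exact Or.inr (Or.inr (Or.inl ⟨hxA, hzB, y, ⟨hyA, hyB'⟩, r1, r2⟩))
    -- AA, AB
    · exact Or.inr (Or.inr (Or.inl ⟨hxA, hzB, c2, ⟨hc2A, hc2B⟩,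
        hTA x hxA y hyA c2 hc2A r1 r2, r2'⟩))
    -- AA, BA
    · refine Or.inl ⟨hxA, hzA, hTA x hxA y hyA z hzA r1 ?_⟩
      exact hTA y hyA c2 hc2A z hzA
        ((hAgree y ⟨hyA, hyB'⟩ c2 ⟨hc2A, hc2B⟩).mpr r2) r2'
    -- BB, AA
    · exact Or.inr (Or.inr (Or.inr ⟨hxB, hzA, y, ⟨hyA', hyB⟩, r1, r2⟩))
    -- BB, BB
    · exact Or.inr (Or.inl ⟨hxB, hzB, hTB x hxB y hyB z hzB r1 r2⟩)
    -- BB, AB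
    · refine Or.inr (Or.inl ⟨hxB, hzB, hTB x hxB y hyB z hzB r1 ?_⟩)
      exact hTB y hyB c2 hc2B z hzB
        ((hAgree y ⟨hyA', hyB⟩ c2 ⟨hc2A, hc2B⟩).mp r2) r2'
    -- BB, BA
    · exact Or.inr (Or.inr (Or.inr ⟨hxB, hzA, c2, ⟨hc2A, hc2B⟩,
        hTB x hxB y hyB c2 hc2B r1 r2, r2'⟩))
    -- AB, AA
    · refine Or.inl ⟨hxA, hzA, hTA x hxA y hyA' z hzA ?_ r2⟩
      exact hTA x hxA c1 hc1A y hyA' r1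
        ((hAgree c1 ⟨hc1A, hc1B⟩ y ⟨hyA', hyB⟩).mpr r1')
    -- AB, BB
    · exact Or.inr (Or.inr (Or.inl ⟨hxA, hzB, c1, ⟨hc1A, hc1B⟩, r1,
        hTB c1 hc1B y hyB z hzB r1' r2⟩))
    -- AB, AB
    · refine Or.inr (Or.inr (Or.inl ⟨hxA, hzB, c2, ⟨hc2A, hc2B⟩, ?_, r2'⟩))
      have h1 : rA c1 y := (hAgree c1 ⟨hc1A, hc1B⟩ y ⟨hyA', hyB⟩).mpr r1'
      exact hTA x hxA c1 hc1A c2 hc2A r1 (hTA c1 hc1A y hyA' c2 hc2A h1 r2)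
    -- AB, BA
    · refine Or.inl ⟨hxA, hzA, ?_⟩
      have h1 : rB c1 c2 := hTB c1 hc1B y hyB c2 hc2B r1' r2
      have h2 : rA c1 c2 := (hAgree c1 ⟨hc1A, hc1B⟩ c2 ⟨hc2A, hc2B⟩).mpr h1
      exact hTA x hxA c1 hc1A z hzA r1 (hTA c1 hc1A c2 hc2A z hzA h2 r2')
    -- BA, AA
    · exact Or.inr (Or.inr (Or.inr ⟨hxB, hzA, c1, ⟨hc1A, hc1B⟩, r1,
        hTA c1 hc1A y hyA z hzA r1' r2⟩))
    -- BA, BB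
    · refine Or.inr (Or.inl ⟨hxB, hzB, ?_⟩)
      have h1 : rB c1 y := (hAgree c1 ⟨hc1A, hc1B⟩ y ⟨hyA, hyB'⟩).mp r1'
      exact hTB x hxB c1 hc1B z hzB r1 (hTB c1 hc1B y hyB' z hzB h1 r2)
    -- BA, AB
    · refine Or.inr (Or.inl ⟨hxB, hzB, ?_⟩)
      have h1 : rA c1 c2 := hTA c1 hc1A y hyA c2 hc2A r1' r2
      have h2 : rB c1 c2 := (hAgree c1 ⟨hc1A, hc1B⟩ c2 ⟨hc2A, hc2B⟩).mp h1
      exact hTB x hxB c1 hc1B z hzB r1 (hTB c1 hc1B c2 hc2B z hzB h2 r2')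
    -- BA, BA
    · refine Or.inr (Or.inr (Or.inr ⟨hxB, hzA, c2, ⟨hc2A, hc2B⟩, ?_, r2'⟩))
      have h1 : rB c1 y := (hAgree c1 ⟨hc1A, hc1B⟩ y ⟨hyA, hyB'⟩).mp r1'
      exact hTB x hxB c1 hc1B c2 hc2B r1 (hTB c1 hc1B y hyB' c2 hc2B h1 r2)
  · intro d hd e he h
    exact Or.inl ⟨hd, he, h⟩
  · intro d hd e he h
    exact Or.inr (Or.inl ⟨hd, he, h⟩)
  · intro T hT hA hB x y hxy
    rcases hxy with ⟨hxA, hyA, r⟩ | ⟨hxB, hyB, r⟩ |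
        ⟨hxA, hyB, c, ⟨hcA, hcB⟩, r, r'⟩ | ⟨hxB, hyA, c, ⟨hcA, hcB⟩, r, r'⟩
    · exact hA x hxA y hyA r
    · exact hB x hxB y hyB r
    · exact hT x c y (hA x hxA c hcA r) (hB c hcB y hyB r')
    · exact hT x c y (hB x hxB c hcB r) (hA c hcA y hyA r')
end

section
/- Two comparable relations amalgamate (symmetric coarser case): let R_A, R_B be transitive relations on A, B agreeing on C = A ∩ B, and S_A, S_B symmetric relations on A, B agreeing on C with R_A ⊆ S_A and R_B ⊆ S_B. Let R be the transitive amalgam of R_A, R_B on D = A ∪ B, and define S on D by: d S e iff (d,e ∈ A and d S_A e) or (d,e ∈ B and d S_B e) or d R e or e R d. Then S is symmetric, R ⊆ S, and the restrictions of S to A and B are S_A and S_B respectively. -/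
/-- The coarser symmetric amalgam. -/
def coarseSym {U : Type*} (A B : Set U) (rA rB sA sB : U → U → Prop) (d e : U) : Prop :=
  (d ∈ A ∧ e ∈ A ∧ sA d e) ∨ (d ∈ B ∧ e ∈ B ∧ sB d e) ∨
  amalg A B rA rB d e ∨ amalg A B rA rB e d

theorem comparable_amalg_symmetric {U : Type*} (A B : Set U)
    (rA rB sA sB : U → U → Prop)
    (hTA : ∀ x ∈ A, ∀ y ∈ A, ∀ z ∈ A, rA x y → rA y z → rA x z)
    (hTB : ∀ x ∈ B, ∀ y ∈ B, ∀ z ∈ B, rB x y → rB y z → rB x z)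
    (hAgreeR : ∀ c ∈ A ∩ B, ∀ c' ∈ A ∩ B, (rA c c' ↔ rB c c'))
    (hSymA : ∀ x ∈ A, ∀ y ∈ A, sA x y → sA y x)
    (hSymB : ∀ x ∈ B, ∀ y ∈ B, sB x y → sB y x)
    (hAgreeS : ∀ c ∈ A ∩ B, ∀ c' ∈ A ∩ B, (sA c c' ↔ sB c c'))
    (hCoarseA : ∀ x ∈ A, ∀ y ∈ A, rA x y → sA x y)
    (hCoarseB : ∀ x ∈ B, ∀ y ∈ B, rB x y → sB x y) :
    (∀ x y, coarseSym A B rA rB sA sB x y → coarseSym A B rA rB sA sB y x) ∧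
    (∀ x y, amalg A B rA rB x y → coarseSym A B rA rB sA sB x y) ∧
    (∀ d ∈ A, ∀ e ∈ A, (coarseSym A B rA rB sA sB d e ↔ sA d e)) ∧
    (∀ d ∈ B, ∀ e ∈ B, (coarseSym A B rA rB sA sB d e ↔ sB d e)) := by
  -- amalg restricted to A is rA
  have hAmA : ∀ d ∈ A, ∀ e ∈ A, amalg A B rA rB d e → rA d e := by
    intro d hd e he h
    rcases h with ⟨_, _, h⟩ | ⟨hdB, heB, h⟩ | ⟨_, heB, c, hc, h1, h2⟩ |
      ⟨hdB, _, c, hc, h1, h2⟩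
    · exact h
    · exact (hAgreeR d ⟨hd, hdB⟩ e ⟨he, heB⟩).mpr h
    · exact hTA d hd c hc.1 e he h1 ((hAgreeR c hc e ⟨he, heB⟩).mpr h2)
    · exact hTA d hd c hc.1 e he ((hAgreeR d ⟨hd, hdB⟩ c hc).mpr h1) h2
  have hAmB : ∀ d ∈ B, ∀ e ∈ B, amalg A B rA rB d e → rB d e := by
    intro d hd e he h
    rcases h with ⟨hdA, heA, h⟩ | ⟨_, _, h⟩ | ⟨hdA, _, c, hc, h1, h2⟩ |
      ⟨_, heA, c, hc, h1, h2⟩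
    · exact (hAgreeR d ⟨hdA, hd⟩ e ⟨heA, he⟩).mp h
    · exact h
    · exact hTB d hd c hc.2 e he ((hAgreeR d ⟨hdA, hd⟩ c hc).mp h1) h2
    · exact hTB d hd c hc.2 e he h1 ((hAgreeR c hc e ⟨heA, he⟩).mp h2)
  refine ⟨?_, ?_, ?_, ?_⟩
  · intro x y h
    rcases h with ⟨hx, hy, h⟩ | ⟨hx, hy, h⟩ | h | h
    · exact Or.inl ⟨hy, hx, hSymA x hx y hy h⟩
    · exact Or.inr (Or.inl ⟨hy, hx, hSymB x hx y hy h⟩)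
    · exact Or.inr (Or.inr (Or.inr h))
    · exact Or.inr (Or.inr (Or.inl h))
  · intro x y h
    exact Or.inr (Or.inr (Or.inl h))
  · intro d hd e he
    constructor
    · intro h
      rcases h with ⟨_, _, h⟩ | ⟨hdB, heB, h⟩ | h | h
      · exact h
      · exact (hAgreeS d ⟨hd, hdB⟩ e ⟨he, heB⟩).mpr h
      · exact hCoarseA d hd e he (hAmA d hd e he h)
      · exact hSymA e he d hd (hCoarseA e he d hd (hAmA e he d hd h))
    · intro h; exact Or.inl ⟨hd, he, h⟩
  · intro d hd e he
    constructor
    · intro h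
      rcases h with ⟨hdA, heA, h⟩ | ⟨_, _, h⟩ | h | h
      · exact (hAgreeS d ⟨hdA, hd⟩ e ⟨heA, he⟩).mp h
      · exact h
      · exact hCoarseB d hd e he (hAmB d hd e he h)
      · exact hSymB e he d hd (hCoarseB e he d hd (hAmB e he d hd h))
    · intro h; exact Or.inr (Or.inl ⟨hd, he, h⟩)
end

section
/- Two comparable relations amalgamate (antisymmetric coarser case): let R_A, R_B be transitive relations on A, B agreeing on C = A ∩ B, and S_A, S_B antisymmetric relations on A, B agreeing on C with R_A ⊆ S_A, R_B ⊆ S_B, and with S_C (the common restriction to C) antisymmetric. Let R be the transitive amalgam of R_A, R_B on D = A ∪ B, and define S on D by: d S e iff (d,e ∈ A and d S_A e) or (d,e ∈ B and d S_B e) or d R e. Then S is antisymmetric. -/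
/-- The coarser (non-symmetric) amalgam. -/
def coarseRel {U : Type*} (A B : Set U) (rA rB sA sB : U → U → Prop) (d e : U) : Prop :=
  (d ∈ A ∧ e ∈ A ∧ sA d e) ∨ (d ∈ B ∧ e ∈ B ∧ sB d e) ∨ amalg A B rA rB d e

theorem comparable_amalg_antisymmetric {U : Type*} (A B : Set U)
    (rA rB sA sB : U → U → Prop)
    (hTA : ∀ x ∈ A, ∀ y ∈ A, ∀ z ∈ A, rA x y → rA y z → rA x z)
    (hTB : ∀ x ∈ B, ∀ y ∈ B, ∀ z ∈ B, rB x y → rB y z → rB x z)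
    (hAgreeR : ∀ c ∈ A ∩ B, ∀ c' ∈ A ∩ B, (rA c c' ↔ rB c c'))
    (hASA : ∀ x ∈ A, ∀ y ∈ A, sA x y → sA y x → x = y)
    (hASB : ∀ x ∈ B, ∀ y ∈ B, sB x y → sB y x → x = y)
    (hAgreeS : ∀ c ∈ A ∩ B, ∀ c' ∈ A ∩ B, (sA c c' ↔ sB c c'))
    (hCoarseA : ∀ x ∈ A, ∀ y ∈ A, rA x y → sA x y)
    (hCoarseB : ∀ x ∈ B, ∀ y ∈ B, rB x y → sB x y) :
    ∀ x y, coarseRel A B rA rB sA sB x y → coarseRel A B rA rB sA sB y x → x = y := by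
  -- Normal form of the coarse relation
  have norm : ∀ u v, coarseRel A B rA rB sA sB u v →
      (u ∈ A ∧ v ∈ A ∧ sA u v) ∨ (u ∈ B ∧ v ∈ B ∧ sB u v) ∨
      (u ∈ A ∧ v ∈ B ∧ ∃ c ∈ A ∩ B, rA u c ∧ rB c v) ∨
      (u ∈ B ∧ v ∈ A ∧ ∃ c ∈ A ∩ B, rB u c ∧ rA c v) := by
    intro u v h
    rcases h with h | h | h
    · exact Or.inl h
    · exact Or.inr (Or.inl h)
    · rcases h with ⟨hu, hv, h⟩ | ⟨hu, hv, h⟩ | h | h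
      · exact Or.inl ⟨hu, hv, hCoarseA u hu v hv h⟩
      · exact Or.inr (Or.inl ⟨hu, hv, hCoarseB u hu v hv h⟩)
      · exact Or.inr (Or.inr (Or.inl h))
      · exact Or.inr (Or.inr (Or.inr h))
  -- From the normal form, both endpoints in A gives sA
  have norm_sA : ∀ u v, u ∈ A → v ∈ A →
      ((u ∈ A ∧ v ∈ A ∧ sA u v) ∨ (u ∈ B ∧ v ∈ B ∧ sB u v) ∨
      (u ∈ A ∧ v ∈ B ∧ ∃ c ∈ A ∩ B, rA u c ∧ rB c v) ∨
      (u ∈ B ∧ v ∈ A ∧ ∃ c ∈ A ∩ B, rB u c ∧ rA c v)) → sA u v := by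
    intro u v hu hv h
    rcases h with ⟨_, _, h⟩ | ⟨huB, hvB, h⟩ | ⟨_, hvB, c, hc, h1, h2⟩ | ⟨huB, _, c, hc, h1, h2⟩
    · exact h
    · exact (hAgreeS u ⟨hu, huB⟩ v ⟨hv, hvB⟩).mpr h
    · exact hCoarseA u hu v hv
        (hTA u hu c hc.1 v hv h1 ((hAgreeR c hc v ⟨hv, hvB⟩).mpr h2))
    · exact hCoarseA u hu v hv
        (hTA u hu c hc.1 v hv ((hAgreeR u ⟨hu, huB⟩ c hc).mpr h1) h2)
  have norm_sB : ∀ u v, u ∈ B → v ∈ B →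
      ((u ∈ A ∧ v ∈ A ∧ sA u v) ∨ (u ∈ B ∧ v ∈ B ∧ sB u v) ∨
      (u ∈ A ∧ v ∈ B ∧ ∃ c ∈ A ∩ B, rA u c ∧ rB c v) ∨
      (u ∈ B ∧ v ∈ A ∧ ∃ c ∈ A ∩ B, rB u c ∧ rA c v)) → sB u v := by
    intro u v hu hv h
    rcases h with ⟨huA, hvA, h⟩ | ⟨_, _, h⟩ | ⟨huA, _, c, hc, h1, h2⟩ | ⟨_, hvA, c, hc, h1, h2⟩
    · exact (hAgreeS u ⟨huA, hu⟩ v ⟨hvA, hv⟩).mp h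
    · exact h
    · exact hCoarseB u hu v hv
        (hTB u hu c hc.2 v hv ((hAgreeR u ⟨huA, hu⟩ c hc).mp h1) h2)
    · exact hCoarseB u hu v hv
        (hTB u hu c hc.2 v hv h1 ((hAgreeR c hc v ⟨hvA, hv⟩).mp h2))
  intro x y hxy hyx
  have hxy' := norm x y hxy
  have hyx' := norm y x hyx
  have finA : x ∈ A → y ∈ A → x = y := fun hx hy =>
    hASA x hx y hy (norm_sA x y hx hy hxy') (norm_sA y x hy hx hyx')
  have finB : x ∈ B → y ∈ B → x = y := fun hx hy =>
    hASB x hx y hy (norm_sB x y hx hy hxy') (norm_sB y x hy hx hyx')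
  rcases hxy' with ⟨hx, hy, _⟩ | ⟨hx, hy, _⟩ | ⟨hxA, hyB, c, hc, h1, h2⟩ |
      ⟨hxB, hyA, c, hc, h1, h2⟩
  · exact finA hx hy
  · exact finB hx hy
  · rcases hyx' with ⟨hy, hx, _⟩ | ⟨hy, hx, _⟩ | ⟨hyA, hxB, _⟩ |
        ⟨_, _, c', hc', h1', h2'⟩
    · exact finA hx hy
    · exact finB hx hy
    · exact finA hxA hyA
    · -- hard case: x ∈ A, y ∈ B, rA x c, rB c y, rB y c', rA c' x
      have hcc' : rA c c' := (hAgreeR c hc c' hc').mpr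
        (hTB c hc.2 y hyB c' hc'.2 h2 h1')
      have hxc' : rA x c' := hTA x hxA c hc.1 c' hc'.1 h1 hcc'
      have hx_eq : x = c' := hASA x hxA c' hc'.1
        (hCoarseA x hxA c' hc'.1 hxc') (hCoarseA c' hc'.1 x hxA h2')
      subst hx_eq
      have hxB : x ∈ B := hc'.2
      have hxc : rB x c := (hAgreeR x hc' c hc).mp h1
      have hxy2 : rB x y := hTB x hxB c hc.2 y hyB hxc h2
      exact hASB x hxB y hyB (hCoarseB x hxB y hyB hxy2)
        (hCoarseB y hyB x hxB h1')
  · rcases hyx' with ⟨hy, hx, _⟩ | ⟨hy, hx, _⟩ | ⟨_, _, c', hc', h1', h2'⟩ |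
        ⟨hyB, hxA, _⟩
    · exact finA hx hy
    · exact finB hx hy
    · -- hard case: x ∈ B, y ∈ A, rB x c, rA c y, rA y c', rB c' x
      have hcc' : rB c c' := (hAgreeR c hc c' hc').mp
        (hTA c hc.1 y hyA c' hc'.1 h2 h1')
      have hxc' : rB x c' := hTB x hxB c hc.2 c' hc'.2 h1 hcc'
      have hx_eq : x = c' := hASB x hxB c' hc'.2
        (hCoarseB x hxB c' hc'.2 hxc') (hCoarseB c' hc'.2 x hxB h2')
      subst hx_eq
      have hxA : x ∈ A := hc'.1
      have hxc : rA x c := (hAgreeR x hc' c hc).mpr h1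
      have hxy2 : rA x y := hTA x hxA c hc.1 y hyA hxc h2
      exact hASA x hxA y hyA (hCoarseA x hxA y hyA hxy2)
        (hCoarseA y hyA x hxA h1')
    · exact finB hxB hyB
end

section
/- The class of structures with a transitive relation R, a coarser binary relation S (R ⊆ S), and a unary function f that is S-preserving (but not required to be R-preserving) does not have the amalgamation property: there exist finite such structures C ⊆ A, C ⊆ B with C = A ∩ B admitting no common amalgam in the class. -/
/-- A structure with a transitive relation `R`, a coarser relation `S`
and an `S`-preserving unary function `f`. -/
structure TransCoarseStr where
  carrier : Type
  R : carrier → carrier → Prop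
  S : carrier → carrier → Prop
  f : carrier → carrier
  trans_R : ∀ x y z, R x y → R y z → R x z
  coarser : ∀ x y, R x y → S x y
  pres_S : ∀ x y, S x y → S (f x) (f y)

/-- Embeddings of such structures. -/
def TCEmb (X Y : TransCoarseStr) (h : X.carrier → Y.carrier) : Prop :=
  Function.Injective h ∧ (∀ x y, X.R x y ↔ Y.R (h x) (h y)) ∧
  (∀ x y, X.S x y ↔ Y.S (h x) (h y)) ∧ (∀ x, h (X.f x) = Y.f (h x))

/-- The base structure `C = {c₁,c₂,c₃}` with `c₁ S c₂ S c₃`, `f = id`. -/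
@[reducible] def Cstr : TransCoarseStr where
  carrier := Fin 3
  R := fun _ _ => False
  S := fun x y => (x = 0 ∧ y = 1) ∨ (x = 1 ∧ y = 2)
  f := id
  trans_R := by decide
  coarser := by decide
  pres_S := by decide

/-- `A = C ∪ {a}` where `a` is `3`, with `a R c₂`, `a S c₂`, `f a = c₁`. -/
@[reducible] def Astr : TransCoarseStr where
  carrier := Fin 4
  R := fun x y => x = 3 ∧ y = 1
  S := fun x y => (x = 0 ∧ y = 1) ∨ (x = 1 ∧ y = 2) ∨ (x = 3 ∧ y = 1)
  f := fun x => if x = 3 then 0 else x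
  trans_R := by decide
  coarser := by decide
  pres_S := by decide

/-- `B = C ∪ {b}` where `b` is `3`, with `c₂ R b`, `c₂ S b`, `f b = c₃`. -/
@[reducible] def Bstr : TransCoarseStr where
  carrier := Fin 4
  R := fun x y => x = 1 ∧ y = 3
  S := fun x y => (x = 0 ∧ y = 1) ∨ (x = 1 ∧ y = 2) ∨ (x = 1 ∧ y = 3)
  f := fun x => if x = 3 then 2 else x
  trans_R := by decide
  coarser := by decide
  pres_S := by decide

@[reducible] def incl : Fin 3 → Fin 4 := fun c => ⟨c.val, by omega⟩

theorem transCoarse_not_AP :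
    ∃ (C A B : TransCoarseStr) (i : C.carrier → A.carrier)
      (j : C.carrier → B.carrier),
      Finite C.carrier ∧ Finite A.carrier ∧ Finite B.carrier ∧
      TCEmb C A i ∧ TCEmb C B j ∧
      ∀ (D : TransCoarseStr) (k : A.carrier → D.carrier)
        (l : B.carrier → D.carrier),
        TCEmb A D k → TCEmb B D l → (∀ c, k (i c) = l (j c)) → False := by
  refine ⟨Cstr, Astr, Bstr, incl, incl, inferInstance, inferInstance, inferInstance,
    ⟨by decide, by decide, by decide, by decide⟩,
    ⟨by decide, by decide, by decide, by decide⟩, ?_⟩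
  intro D k l hk hl hcomm
  obtain ⟨_, hkR, hkS, hkf⟩ := hk
  obtain ⟨_, hlR, hlS, hlf⟩ := hl
  -- k 1 = l 1 and k 0 = l 0
  have h1 : k 1 = l 1 := hcomm 1
  have h0 : k 0 = l 0 := hcomm 0
  -- D.R (k 3) (k 1) since a R c₂ in A
  have hr1 : D.R (k 3) (k 1) := (hkR 3 1).mp (by decide)
  -- D.R (l 1) (l 3) since c₂ R b in B
  have hr2 : D.R (l 1) (l 3) := (hlR 1 3).mp (by decide)
  have hr : D.R (k 3) (l 3) := D.trans_R _ _ _ (h1 ▸ hr1) hr2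
  have hs : D.S (k 3) (l 3) := D.coarser _ _ hr
  have hsf : D.S (D.f (k 3)) (D.f (l 3)) := D.pres_S _ _ hs
  have e1 : k 0 = D.f (k 3) := by
    have := hkf 3; simpa using this
  have e2 : l 2 = D.f (l 3) := by
    have := hlf 3; simpa using this
  rw [← e1, ← e2, h0] at hsf
  exact absurd ((hlS 0 2).mpr hsf) (by decide)
end

section
/- The theory of a reflexive transitive relation R with a unary function f that strictly preserves R (d R e and d ≠ e imply f(d) R f(e) and f(d) ≠ f(e)) does not have the amalgamation property: there exist finite such structures C ⊆ A, C ⊆ B with C = A ∩ B admitting no amalgam. -/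
/-- A structure with a reflexive transitive relation `R` and a unary
function `f` strictly preserving `R`. -/
structure StrictPresStr where
  carrier : Type
  R : carrier → carrier → Prop
  f : carrier → carrier
  refl_R : ∀ x, R x x
  trans_R : ∀ x y z, R x y → R y z → R x z
  strict_pres : ∀ x y, R x y → x ≠ y → R (f x) (f y) ∧ f x ≠ f y

/-- Embeddings of such structures. -/
def SPEmb (X Y : StrictPresStr) (h : X.carrier → Y.carrier) : Prop :=
  Function.Injective h ∧ (∀ x y, X.R x y ↔ Y.R (h x) (h y)) ∧
  (∀ x, h (X.f x) = Y.f (h x))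

-- 0 = c, 1 = d, 2 = e
@[reducible] def myC : StrictPresStr where
  carrier := Fin 3
  R := fun x y => x = y ∨ (x = 1 ∧ y = 2) ∨ (x = 2 ∧ y = 1)
  f := ![1, 2, 1]
  refl_R := by decide
  trans_R := by decide
  strict_pres := by decide

-- 3 = a
@[reducible] def myA : StrictPresStr where
  carrier := Fin 4
  R := fun x y => x = y ∨ (x = 1 ∧ y = 2) ∨ (x = 2 ∧ y = 1) ∨ (x = 3 ∧ y = 0)
  f := ![1, 2, 1, 2]
  refl_R := by decide
  trans_R := by decide
  strict_pres := by decide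

-- 3 = b
@[reducible] def myB : StrictPresStr where
  carrier := Fin 4
  R := fun x y => x = y ∨ (x = 1 ∧ y = 2) ∨ (x = 2 ∧ y = 1) ∨ (x = 0 ∧ y = 3)
  f := ![1, 2, 1, 2]
  refl_R := by decide
  trans_R := by decide
  strict_pres := by decide

@[reducible] def myi : Fin 3 → Fin 4 := ![0, 1, 2]

theorem strictPres_not_AP :
    ∃ (C A B : StrictPresStr) (i : C.carrier → A.carrier)
      (j : C.carrier → B.carrier),
      Finite C.carrier ∧ Finite A.carrier ∧ Finite B.carrier ∧
      SPEmb C A i ∧ SPEmb C B j ∧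
      ∀ (D : StrictPresStr) (k : A.carrier → D.carrier)
        (l : B.carrier → D.carrier),
        SPEmb A D k → SPEmb B D l → (∀ c, k (i c) = l (j c)) → False := by
  refine ⟨myC, myA, myB, myi, myi, inferInstance, inferInstance, inferInstance,
    ⟨by decide, by decide, by decide⟩, ⟨by decide, by decide, by decide⟩,
    fun D k l hk hl hcom => ?_⟩
  obtain ⟨kinj, kR, kf⟩ := hk
  obtain ⟨linj, lR, lf⟩ := hl
  have h0 : k 0 = l 0 := hcom 0
  have h2 : k 2 = l 2 := hcom 2
  -- k 3 R k 0 in D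
  have hka : D.R (k 3) (k 0) := (kR 3 0).mp (by decide)
  have hlb : D.R (l 0) (l 3) := (lR 0 3).mp (by decide)
  have hRab : D.R (k 3) (l 3) := D.trans_R _ _ _ (h0 ▸ hka) hlb
  have hne : k 3 ≠ l 3 := by
    intro h
    have : D.R (k 0) (k 3) := h0 ▸ h ▸ hlb
    have : myA.R 0 3 := (kR 0 3).mpr this
    exact absurd this (by decide)
  have := D.strict_pres _ _ hRab hne
  apply this.2
  have e1 : D.f (k 3) = k 2 := (kf 3).symm
  have e2 : D.f (l 3) = l 2 := (lf 3).symm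
  rw [e1, e2, h2]
end
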